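/- Let B be a base of the layered direct sum matroid H⟨F⟩ and let e ∈ F \ B. Then: (a) there is an integer z such that the fundamental circuit C_{H⟨F⟩}(e,B) is a circuit of the z-th summand matroid T_z-matroid; (b) C_{H⟨F⟩}(e,B) ⊆ C_H(e,B); and (c) g ≻_H f for every f ∈ C_{H⟨F⟩}(e,B) and every g ∈ C_H(e,B) \ C_{H⟨F⟩}(e,B). -/

import Mathlib

open Finset
open scoped Classical

/-- A matroid on a finite ground type `U`, given by its independent sets. -/
structure FinMatroid (U : Type*) [DecidableEq U] [Fintype U] where
  Indep : Finset U → Prop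
  empty_indep : Indep ∅
  subset_indep : ∀ ⦃I J : Finset U⦄, I ⊆ J → Indep J → Indep I
  exchange : ∀ ⦃I J : Finset U⦄, Indep I → Indep J → I.card < J.card →
    ∃ u ∈ J, u ∉ I ∧ Indep (insert u I)

namespace FinMatroid

variable {U : Type*} [DecidableEq U] [Fintype U]

/-- A circuit: an inclusion-wise minimal dependent set. -/
def Circuit (M : FinMatroid U) (C : Finset U) : Prop :=
  ¬ M.Indep C ∧ ∀ D ⊂ C, M.Indep D

/-- `sp M I`: elements `u ∉ I` with `I + u` dependent. -/
def sp (M : FinMatroid U) (I : Finset U) : Set U :=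
  {u | u ∉ I ∧ ¬ M.Indep (insert u I)}

/-- The fundamental circuit of `u` for the independent set `I`
(for `u ∈ sp M I` this is the unique circuit contained in `I + u`). -/
noncomputable def fundC (M : FinMatroid U) (I : Finset U) (u : U) : Finset U :=
  (insert u I).filter (fun w => M.Indep ((insert u I).erase w))

/-- The rank of a set: maximum size of an independent subset. -/
noncomputable def rk (M : FinMatroid U) (X : Finset U) : ℕ :=
  ((X.powerset).filter (fun I => M.Indep I)).sup Finset.card

end FinMatroid

variable {U : Type*} [DecidableEq U] [Fintype U]

/-- Independence predicate of the restriction of an independence system to `X`. -/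
def RestrictIndep (Ind : Finset U → Prop) (X : Finset U) (I : Finset U) : Prop :=
  I ⊆ X ∧ Ind I

/-- Rank function associated with an independence predicate. -/
noncomputable def rkOf (Ind : Finset U → Prop) (X : Finset U) : ℕ :=
  ((X.powerset).filter Ind).sup Finset.card

/-- Independence predicate of the contraction by `X`:
`I ⊆ U \ X` is independent iff `r(I ∪ X) - r(X) = |I|`. -/
def ContractIndepOf (Ind : Finset U → Prop) (X I : Finset U) : Prop :=
  Disjoint I X ∧ rkOf Ind (I ∪ X) = rkOf Ind X + I.card

/-- A base: a maximal independent set. -/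
def BaseOf (Ind : Finset U → Prop) (B : Finset U) : Prop :=
  Ind B ∧ ∀ J, Ind J → B ⊆ J → J = B

/-- A circuit of a general independence system. -/
def CircuitOf (Ind : Finset U → Prop) (C : Finset U) : Prop :=
  ¬ Ind C ∧ ∀ D ⊂ C, Ind D

/-!
The circuit `CF` of the direct sum lies in a single summand, say the one on `T z`. Maximality of
`B`, layer by layer, shows that `B` is independent in `H` and that `A := B ∩ (T 0 ∪ ⋯ ∪ T (z - 1))`
is a basis of the layers below `T z`. Contracting those layers therefore has the same effect as
contracting `A`, so `CF ∪ A` is dependent in `H` while each `(CF - f) ∪ A` is independent. The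
unique circuit `CH` of `H` inside `B + e` thus lies in `CF ∪ A` and contains `CF`, and its elements
outside `CF` come from earlier layers, which are strictly `≻_H` everything in `T z`.
-/

section Layers

variable {α : Type*} [DecidableEq α] {n : ℕ} (T : Fin n → Finset α)

/-- `layersBelow T k` is `T 0 ∪ ⋯ ∪ T (k - 1)`; indexing by `ℕ` lets `k` run up to `n`. -/
def layersBelow (k : ℕ) : Finset α :=
  (univ.filter (fun j : Fin n => (j : ℕ) < k)).biUnion T

lemma mem_layersBelow {k : ℕ} {x : α} :
    x ∈ layersBelow T k ↔ ∃ j : Fin n, (j : ℕ) < k ∧ x ∈ T j := by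
  simp [layersBelow]

@[simp] lemma layersBelow_zero : layersBelow T 0 = ∅ := by
  ext; simp [mem_layersBelow]

lemma layersBelow_succ {k : ℕ} (hk : k < n) :
    layersBelow T (k + 1) = layersBelow T k ∪ T ⟨k, hk⟩ := by
  ext x
  simp only [mem_layersBelow, mem_union]
  constructor
  · rintro ⟨j, hj, hx⟩
    obtain hj | rfl := (Nat.lt_succ_iff.1 hj).lt_or_eq
    · exact Or.inl ⟨j, hj, hx⟩
    · exact Or.inr hx
  · rintro (⟨j, hj, hx⟩ | hx)
    · exact ⟨j, hj.trans k.lt_succ_self, hx⟩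
    · exact ⟨⟨k, hk⟩, k.lt_succ_self, hx⟩

lemma layersBelow_self : layersBelow T n = univ.biUnion T := by
  ext x; simp [mem_layersBelow]

variable {T}

lemma disjoint_layersBelow (hdisj : ∀ i j : Fin n, i ≠ j → Disjoint (T i) (T j)) (i : Fin n) :
    Disjoint (T i) (layersBelow T i) := by
  rw [layersBelow, disjoint_biUnion_right]
  intro j hj
  exact hdisj i j (fun h => (h ▸ (mem_filter.1 hj).2).false)

end Layers

lemma exists_subset_circuitOf_of_circuitOf_directSum {α ι : Type*} [DecidableEq α]
    {F : Finset α} {T : ι → Finset α} {P : ι → Finset α → Prop} {C : Finset α}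
    (hC : CircuitOf (fun I => I ⊆ F ∧ ∀ i, P i (I ∩ T i)) C) (hCF : C ⊆ F) :
    ∃ z, C ⊆ T z ∧ CircuitOf (P z) C := by
  obtain ⟨z, hz⟩ : ∃ z, ¬ P z (C ∩ T z) := by simpa [hCF] using hC.1
  have hCz : C ⊆ T z := by
    by_contra hCz
    have h := (hC.2 _ (inter_subset_left.ssubset_of_ne fun h => hCz (inter_eq_left.1 h))).2 z
    rw [inter_assoc, inter_self] at h
    exact hz h
  rw [inter_eq_left.2 hCz] at hz
  refine ⟨z, hCz, hz, fun D hD => ?_⟩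
  simpa [inter_eq_left.2 (hD.subset.trans hCz)] using (hC.2 D hD).2 z

namespace FinMatroid

variable (M : FinMatroid U)

lemma card_le_rkOf {I X : Finset U} (hI : M.Indep I) (hIX : I ⊆ X) :
    I.card ≤ rkOf M.Indep X :=
  le_sup (mem_filter.2 ⟨mem_powerset.2 hIX, hI⟩)

lemma rkOf_le_card (X : Finset U) : rkOf M.Indep X ≤ X.card :=
  Finset.sup_le fun _ hI => card_le_card (mem_powerset.1 (mem_filter.1 hI).1)

lemma rkOf_mono {X Y : Finset U} (h : X ⊆ Y) : rkOf M.Indep X ≤ rkOf M.Indep Y :=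
  Finset.sup_le fun _ hI =>
    M.card_le_rkOf (mem_filter.1 hI).2 ((mem_powerset.1 (mem_filter.1 hI).1).trans h)

lemma exists_indep_card_eq_rkOf (X : Finset U) :
    ∃ I ⊆ X, M.Indep I ∧ I.card = rkOf M.Indep X := by
  obtain ⟨I, hI, hcard⟩ :=
    exists_mem_eq_sup _ ⟨∅, mem_filter.2 ⟨empty_mem_powerset X, M.empty_indep⟩⟩ card
  rw [mem_filter, mem_powerset] at hI
  exact ⟨I, hI.1, hI.2, hcard.symm⟩

lemma indep_iff_rkOf_eq_card {X : Finset U} : M.Indep X ↔ rkOf M.Indep X = X.card := by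
  refine ⟨fun h => (M.rkOf_le_card X).antisymm (M.card_le_rkOf h subset_rfl), fun h => ?_⟩
  obtain ⟨I, hIX, hI, hcard⟩ := M.exists_indep_card_eq_rkOf X
  rwa [← eq_of_subset_of_card_le hIX (h ▸ hcard.ge)]

lemma rkOf_union_le (A B : Finset U) : rkOf M.Indep (A ∪ B) ≤ rkOf M.Indep A + B.card := by
  refine Finset.sup_le fun I hI => ?_
  rw [mem_filter, mem_powerset] at hI
  have hIB : I \ B ⊆ A := by
    intro x hx
    rw [mem_sdiff] at hx
    exact (mem_union.1 (hI.1 hx.1)).resolve_right hx.2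
  calc I.card ≤ (I \ B).card + B.card := card_le_card_sdiff_add_card
    _ ≤ rkOf M.Indep A + B.card :=
      Nat.add_le_add_right (M.card_le_rkOf (M.subset_indep sdiff_subset hI.2) hIB) _

lemma rkOf_insert_le (X : Finset U) (t : U) : rkOf M.Indep (insert t X) ≤ rkOf M.Indep X + 1 := by
  simpa [union_comm] using M.rkOf_union_le X {t}

lemma exists_indep_superset_card_eq_rkOf {I X : Finset U} (hI : M.Indep I) (hIX : I ⊆ X) :
    ∃ J, I ⊆ J ∧ J ⊆ X ∧ M.Indep J ∧ J.card = rkOf M.Indep X := by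
  obtain hlt | heq := (M.card_le_rkOf hI hIX).lt_or_eq
  · obtain ⟨K, hKX, hK, hKcard⟩ := M.exists_indep_card_eq_rkOf X
    obtain ⟨u, huK, huI, hu⟩ := M.exchange hI hK (hKcard ▸ hlt)
    obtain ⟨J, hIJ, hJX, hJ, hJcard⟩ :=
      exists_indep_superset_card_eq_rkOf hu (insert_subset (hKX huK) hIX)
    exact ⟨J, (subset_insert u I).trans hIJ, hJX, hJ, hJcard⟩
  · exact ⟨I, subset_rfl, hIX, hI, heq⟩
termination_by rkOf M.Indep X - I.card
decreasing_by rw [card_insert_of_notMem huI]; omega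

lemma rkOf_union_add_rkOf_inter_le (A B : Finset U) :
    rkOf M.Indep (A ∪ B) + rkOf M.Indep (A ∩ B) ≤ rkOf M.Indep A + rkOf M.Indep B := by
  obtain ⟨I, hIAB, hI, hIcard⟩ := M.exists_indep_card_eq_rkOf (A ∩ B)
  obtain ⟨J, hIJ, hJAB, hJ, hJcard⟩ :=
    M.exists_indep_superset_card_eq_rkOf hI (hIAB.trans inter_subset_union)
  have hA := M.card_le_rkOf (M.subset_indep inter_subset_left hJ) (inter_subset_right : J ∩ A ⊆ A)
  have hB := M.card_le_rkOf (M.subset_indep inter_subset_left hJ) (inter_subset_right : J ∩ B ⊆ B)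
  have hunion : J ∩ A ∪ J ∩ B = J := by rw [← inter_union_distrib_left, inter_eq_left.2 hJAB]
  have hinter : J ∩ A ∩ (J ∩ B) = J ∩ (A ∩ B) := by rw [← inter_inter_distrib_left]
  have hcard := card_union_add_card_inter (J ∩ A) (J ∩ B)
  rw [hunion, hinter] at hcard
  have hIJAB := card_le_card (subset_inter hIJ hIAB)
  omega

lemma rkOf_union_eq_of_subset_of_rkOf_eq {X Y Z : Finset U} (hZY : Z ⊆ Y)
    (h : rkOf M.Indep Y = rkOf M.Indep Z) : rkOf M.Indep (X ∪ Y) = rkOf M.Indep (X ∪ Z) := by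
  refine le_antisymm ?_ (M.rkOf_mono (union_subset_union subset_rfl hZY))
  have hsub := M.rkOf_union_add_rkOf_inter_le (X ∪ Z) Y
  have hZ := M.rkOf_mono (subset_inter (subset_union_right (s₁ := X)) hZY)
  rw [union_assoc, union_eq_right.2 hZY] at hsub
  omega

lemma rkOf_union_eq_of_forall_rkOf_insert_eq {Y Z : Finset U}
    (h : ∀ t ∈ Y, rkOf M.Indep (insert t Z) = rkOf M.Indep Z) :
    rkOf M.Indep (Z ∪ Y) = rkOf M.Indep Z := by
  induction Y using Finset.induction with
  | empty => simp
  | insert t Y _ ih =>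
    have ht := M.rkOf_union_eq_of_subset_of_rkOf_eq (X := Y) (subset_insert t Z)
      (h t (mem_insert_self t Y))
    have hswap : Z ∪ insert t Y = Y ∪ insert t Z := by rw [union_insert, union_insert, union_comm]
    rw [hswap, ht, union_comm, ih fun s hs => h s (mem_insert_of_mem hs)]

lemma exists_circuit_subset {X : Finset U} (hX : ¬ M.Indep X) : ∃ C ⊆ X, M.Circuit C := by
  induction X using Finset.strongInduction with
  | H X ih =>
    by_cases hmin : ∀ D ⊂ X, M.Indep D
    · exact ⟨X, subset_rfl, hX, hmin⟩
    obtain ⟨D, hDX, hD⟩ : ∃ D ⊂ X, ¬ M.Indep D := by simpa using hmin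
    obtain ⟨C, hCD, hC⟩ := ih D hDX hD
    exact ⟨C, hCD.trans hDX.subset, hC⟩

variable {M}

lemma Circuit.rkOf_lt_card {C : Finset U} (hC : M.Circuit C) : rkOf M.Indep C < C.card :=
  (M.rkOf_le_card C).lt_of_ne fun h => hC.1 ((M.indep_iff_rkOf_eq_card).2 h)

lemma Circuit.mem_of_subset_insert {B C : Finset U} {e : U} (hB : M.Indep B)
    (hC : M.Circuit C) (hCB : C ⊆ insert e B) : e ∈ C := by
  by_contra he
  exact hC.1 (M.subset_indep ((subset_insert_iff_of_notMem he).1 hCB) hB)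

lemma Circuit.eq_of_subset_insert {B C₁ C₂ : Finset U} {e : U} (hB : M.Indep B)
    (h₁ : M.Circuit C₁) (h₂ : M.Circuit C₂) (hs₁ : C₁ ⊆ insert e B) (hs₂ : C₂ ⊆ insert e B) :
    C₁ = C₂ := by
  by_contra hne
  have hinter : M.Indep (C₁ ∩ C₂) := by
    refine h₁.2 _ (inter_subset_left.ssubset_of_ne fun h => ?_)
    exact h₁.1 (h₂.2 _ ((inter_eq_left.1 h).ssubset_of_ne hne))
  have hunion : ((C₁ ∪ C₂).erase e).card ≤ rkOf M.Indep (C₁ ∪ C₂) :=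
    M.card_le_rkOf (M.subset_indep (subset_insert_iff.1 (union_subset hs₁ hs₂)) hB)
      (erase_subset e _)
  have he : e ∈ C₁ ∪ C₂ := mem_union_left _ (h₁.mem_of_subset_insert hB hs₁)
  have hsubmod := M.rkOf_union_add_rkOf_inter_le C₁ C₂
  have hcard := card_union_add_card_inter C₁ C₂
  rw [(M.indep_iff_rkOf_eq_card).1 hinter] at hsubmod
  have := card_erase_of_mem he
  have := card_pos.2 ⟨e, he⟩
  have := h₁.rkOf_lt_card
  have := h₂.rkOf_lt_card
  omega

lemma Circuit.subset_of_not_indep {B C D : Finset U} {e : U} (hB : M.Indep B)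
    (hC : M.Circuit C) (hCB : C ⊆ insert e B) (hD : ¬ M.Indep D) (hDB : D ⊆ insert e B) :
    C ⊆ D := by
  obtain ⟨C', hC'D, hC'⟩ := M.exists_circuit_subset hD
  rwa [hC.eq_of_subset_insert hB hC' hCB (hC'D.trans hDB)]

lemma Circuit.subset_of_forall_indep_erase_union {C D A : Finset U} (hC : M.Circuit C)
    (hCDA : C ⊆ D ∪ A) (hD : ∀ f ∈ D, M.Indep (D.erase f ∪ A)) : D ⊆ C := by
  intro f hf
  by_contra hfC
  refine hC.1 (M.subset_indep (fun x hx => ?_) (hD f hf))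
  obtain hxD | hxA := mem_union.1 (hCDA hx)
  · exact mem_union_left _ (mem_erase.2 ⟨ne_of_mem_of_not_mem hx hfC, hxD⟩)
  · exact mem_union_right _ hxA

variable (M)

def IsBasis (I X : Finset U) : Prop :=
  I ⊆ X ∧ M.Indep I ∧ rkOf M.Indep X = I.card

variable {M}

lemma IsBasis.rkOf_union_eq {I X : Finset U} (hI : M.IsBasis I X) (Y : Finset U) :
    rkOf M.Indep (Y ∪ X) = rkOf M.Indep (Y ∪ I) :=
  M.rkOf_union_eq_of_subset_of_rkOf_eq hI.1
    (hI.2.2.trans ((M.indep_iff_rkOf_eq_card).1 hI.2.1).symm)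

lemma IsBasis.contractIndepOf_iff {I X J : Finset U} (hI : M.IsBasis I X) (hJX : Disjoint J X) :
    ContractIndepOf M.Indep X J ↔ M.Indep (J ∪ I) := by
  rw [ContractIndepOf, M.indep_iff_rkOf_eq_card, hI.rkOf_union_eq,
    card_union_of_disjoint (hJX.mono_right hI.1), hI.2.2]
  simp only [hJX, true_and, add_comm]

lemma IsBasis.union {I X J Y : Finset U} (hI : M.IsBasis I X) (hJY : J ⊆ Y)
    (hJ : ContractIndepOf M.Indep X J)
    (hspan : ∀ t ∈ Y, rkOf M.Indep (insert t (J ∪ X)) = rkOf M.Indep (J ∪ X)) :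
    M.IsBasis (J ∪ I) (X ∪ Y) := by
  refine ⟨(union_subset_union hJY hI.1).trans (union_comm Y X).le,
    (hI.contractIndepOf_iff hJ.1).1 hJ, ?_⟩
  have hXY : X ∪ Y = J ∪ X ∪ Y := by
    rw [union_comm J, union_assoc, union_eq_right.2 hJY]
  rw [hXY, M.rkOf_union_eq_of_forall_rkOf_insert_eq hspan, hJ.2, hI.2.2,
    card_union_of_disjoint (hJ.1.mono_right hI.1), add_comm]

lemma rkOf_insert_eq_of_not_contractIndepOf {X J : Finset U} {t : U}
    (hJ : ContractIndepOf M.Indep X J) (htJ : t ∉ J) (htX : t ∉ X)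
    (ht : ¬ ContractIndepOf M.Indep X (insert t J)) :
    rkOf M.Indep (insert t (J ∪ X)) = rkOf M.Indep (J ∪ X) := by
  have hne : rkOf M.Indep (insert t (J ∪ X)) ≠ rkOf M.Indep X + (J.card + 1) := by
    rw [← insert_union, ← card_insert_of_notMem htJ]
    exact fun h => ht ⟨disjoint_insert_left.2 ⟨htX, hJ.1⟩, h⟩
  have hle := M.rkOf_insert_le (J ∪ X) t
  have hge := M.rkOf_mono (subset_insert t (J ∪ X))
  have := hJ.2
  omega

section Layered

variable (M : FinMatroid U) {n : ℕ} (T : Fin n → Finset U)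

/-- Independence in `H⟨F⟩` for `F = ⋃ i, T i`: the direct sum of the summands
`(H / (T 0 ∪ ⋯ ∪ T (i - 1))) | T i`. -/
def LayeredIndep (I : Finset U) : Prop :=
  I ⊆ univ.biUnion T ∧ ∀ i : Fin n,
    RestrictIndep (ContractIndepOf M.Indep (layersBelow T i)) (T i) (I ∩ T i)

variable {M T}

lemma LayeredIndep.insert {I : Finset U} {i : Fin n} {t : U}
    (hdisj : ∀ i j : Fin n, i ≠ j → Disjoint (T i) (T j))
    (hI : M.LayeredIndep T I) (ht : t ∈ T i)
    (hti : ContractIndepOf M.Indep (layersBelow T i) (insert t (I ∩ T i))) :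
    M.LayeredIndep T (insert t I) := by
  refine ⟨insert_subset (subset_biUnion_of_mem T (mem_univ i) ht) hI.1, fun j => ?_⟩
  obtain rfl | hij := eq_or_ne i j
  · rw [insert_inter_of_mem ht]
    exact ⟨insert_subset ht inter_subset_right, hti⟩
  · rw [insert_inter_of_notMem (disjoint_left.1 (hdisj i j hij) ht)]
    exact hI.2 j

lemma rkOf_insert_eq_of_baseOf_layeredIndep {B : Finset U}
    (hdisj : ∀ i j : Fin n, i ≠ j → Disjoint (T i) (T j)) (hB : BaseOf (M.LayeredIndep T) B)
    {i : Fin n} {t : U} (ht : t ∈ T i) :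
    rkOf M.Indep (insert t (B ∩ T i ∪ layersBelow T i)) =
      rkOf M.Indep (B ∩ T i ∪ layersBelow T i) := by
  by_cases htB : t ∈ B
  · rw [insert_eq_of_mem (mem_union_left _ (mem_inter.2 ⟨htB, ht⟩))]
  refine rkOf_insert_eq_of_not_contractIndepOf (hB.1.2 i).2 (fun h => htB (mem_inter.1 h).1)
    (disjoint_left.1 (disjoint_layersBelow hdisj i) ht) fun hti => htB ?_
  rw [← hB.2 _ (hB.1.insert hdisj ht hti) (subset_insert t B)]
  exact mem_insert_self t B

lemma isBasis_inter_layersBelow_of_baseOf_layeredIndep {B : Finset U}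
    (hdisj : ∀ i j : Fin n, i ≠ j → Disjoint (T i) (T j)) (hB : BaseOf (M.LayeredIndep T) B)
    {k : ℕ} (hk : k ≤ n) :
    M.IsBasis (B ∩ layersBelow T k) (layersBelow T k) := by
  induction k with
  | zero => simpa [IsBasis, M.empty_indep] using M.rkOf_le_card ∅
  | succ k ih =>
    rw [layersBelow_succ T hk, inter_union_distrib_left, union_comm (B ∩ _)]
    exact (ih (Nat.le_of_succ_le hk)).union inter_subset_right (hB.1.2 ⟨k, hk⟩).2
      fun t ht => rkOf_insert_eq_of_baseOf_layeredIndep hdisj hB ht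

end Layered

end FinMatroid

open FinMatroid in
/-- `pre e f` encodes `e ≽_H f`, and `T 0, …, T (n - 1)` are the heads `T_t` in order.
`CF` and `CH` are the fundamental circuits of `e` for `B` in `H⟨F⟩` and in `H`. -/
theorem fund_circuit_of_layered_direct_sum_general (M : FinMatroid U) (pre : U → U → Prop)
    (F : Finset U) (n : ℕ) (T : Fin n → Finset U)
    (hdisj : ∀ i j : Fin n, i ≠ j → Disjoint (T i) (T j))
    (hunion : Finset.univ.biUnion T = F)
    (hacross : ∀ i j : Fin n, i < j → ∀ e ∈ T i, ∀ f ∈ T j, pre e f ∧ ¬ pre f e)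
    (B : Finset U)
    (hB : BaseOf (fun I => I ⊆ F ∧ ∀ i : Fin n,
      RestrictIndep (ContractIndepOf M.Indep
        ((Finset.univ.filter (fun j : Fin n => j < i)).biUnion T)) (T i) (I ∩ T i)) B)
    (e : U) (he : e ∈ F \ B)
    (CF : Finset U)
    (hCF : CircuitOf (fun I => I ⊆ F ∧ ∀ i : Fin n,
      RestrictIndep (ContractIndepOf M.Indep
        ((Finset.univ.filter (fun j : Fin n => j < i)).biUnion T)) (T i) (I ∩ T i)) CF)
    (hCFsub : CF ⊆ insert e B)
    (CH : Finset U) (hCH : M.Circuit CH) (hCHsub : CH ⊆ insert e B) :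
    (∃ z : Fin n, CircuitOf
        (RestrictIndep (ContractIndepOf M.Indep
          ((Finset.univ.filter (fun j : Fin n => j < z)).biUnion T)) (T z)) CF) ∧
      CF ⊆ CH ∧
      ∀ f ∈ CF, ∀ g ∈ CH, g ∉ CF → (pre g f ∧ ¬ pre f g) := by
  subst hunion
  change BaseOf (M.LayeredIndep T) B at hB
  obtain ⟨z, hCFz, hCFcirc⟩ := exists_subset_circuitOf_of_circuitOf_directSum hCF
    (hCFsub.trans (insert_subset (mem_sdiff.1 he).1 hB.1.1))
  have hBindep : M.Indep B := by
    simpa [layersBelow_self, inter_eq_left.2 hB.1.1] using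
      (isBasis_inter_layersBelow_of_baseOf_layeredIndep hdisj hB le_rfl).2.1
  set A := B ∩ layersBelow T z
  have hA : M.IsBasis A (layersBelow T z) :=
    isBasis_inter_layersBelow_of_baseOf_layeredIndep hdisj hB z.is_lt.le
  have hdisjz : ∀ D ⊆ CF, Disjoint D (layersBelow T z) :=
    fun D hD => (disjoint_layersBelow hdisj z).mono_left (hD.trans hCFz)
  have hdep : ¬ M.Indep (CF ∪ A) :=
    fun h => hCFcirc.1 ⟨hCFz, (hA.contractIndepOf_iff (hdisjz CF subset_rfl)).2 h⟩
  have hCHA : CH ⊆ CF ∪ A := hCH.subset_of_not_indep hBindep hCHsub hdep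
    (union_subset hCFsub (inter_subset_left.trans (subset_insert e B)))
  refine ⟨⟨z, hCFcirc⟩, hCH.subset_of_forall_indep_erase_union hCHA fun f hf =>
    (hA.contractIndepOf_iff (hdisjz _ (erase_subset f CF))).1
      (hCFcirc.2 _ (erase_ssubset hf)).2, fun f hf g hg hgCF => ?_⟩
  obtain ⟨j, hjz, hgj⟩ :=
    (mem_layersBelow T).1 (mem_inter.1 ((mem_union.1 (hCHA hg)).resolve_left hgCF)).2
  exact hacross j z hjz g hgj f (hCFz hf)

/-- `pre e f` means `e ≽_H f`.  Setting as in the layered construction `H⟨F⟩`: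
`B` is a base of the direct sum of the summand matroids `(H / T_{1,i-1}) | T i`,
`e ∈ F \ B`, `CF` is the fundamental circuit of `e` for `B` in `H⟨F⟩`
(the unique circuit of `H⟨F⟩` contained in `B + e`), and `CH` is the fundamental
circuit of `e` for `B` in `H`.  Then (a) `CF` is a circuit of some summand
matroid, (b) `CF ⊆ CH`, and (c) `g ≻_H f` for every `f ∈ CF` and
`g ∈ CH \ CF`. -/
theorem fund_circuit_of_layered_direct_sum (M : FinMatroid U) (pre : U → U → Prop)
    (htrans : Transitive pre) (htot : ∀ a b : U, pre a b ∨ pre b a)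
    (F : Finset U) (n : ℕ) (T : Fin n → Finset U)
    (hne : ∀ i, (T i).Nonempty)
    (hdisj : ∀ i j : Fin n, i ≠ j → Disjoint (T i) (T j))
    (hunion : Finset.univ.biUnion T = F)
    (hwithin : ∀ i : Fin n, ∀ e ∈ T i, ∀ f ∈ T i, pre e f)
    (hacross : ∀ i j : Fin n, i < j → ∀ e ∈ T i, ∀ f ∈ T j, pre e f ∧ ¬ pre f e)
    (B : Finset U)
    (hB : BaseOf (fun I => I ⊆ F ∧ ∀ i : Fin n,
      RestrictIndep (ContractIndepOf M.Indep
        ((Finset.univ.filter (fun j : Fin n => j < i)).biUnion T)) (T i) (I ∩ T i)) B)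
    (e : U) (he : e ∈ F \ B)
    (CF : Finset U)
    (hCF : CircuitOf (fun I => I ⊆ F ∧ ∀ i : Fin n,
      RestrictIndep (ContractIndepOf M.Indep
        ((Finset.univ.filter (fun j : Fin n => j < i)).biUnion T)) (T i) (I ∩ T i)) CF)
    (hCFsub : CF ⊆ insert e B)
    (CH : Finset U) (hCH : M.Circuit CH) (hCHsub : CH ⊆ insert e B) :
    (∃ z : Fin n, CircuitOf
        (RestrictIndep (ContractIndepOf M.Indep
          ((Finset.univ.filter (fun j : Fin n => j < z)).biUnion T)) (T z)) CF) ∧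
      CF ⊆ CH ∧
      ∀ f ∈ CF, ∀ g ∈ CH, g ∉ CF → (pre g f ∧ ¬ pre f g) :=
  fund_circuit_of_layered_direct_sum_general M pre F n T hdisj hunion hacross B hB e he CF hCF
    hCFsub CH hCH hCHsub
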